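/- Let Ω ⊆ ℍ be an axially symmetric s-domain and let f : Ω → ℍ be slice regular. Suppose there exists J ∈ 𝕊 such that f(Ω ∩ L_J) ⊆ L_J. If there exist x₀, y₀ ∈ ℝ and I ∈ 𝕊 with I ∉ L_J such that f(x₀+y₀I) = 0, then f(x₀+y₀L) = 0 for every L ∈ 𝕊. -/

import Mathlib

open Quaternion

noncomputable section

/-- The 2-sphere of imaginary units in the quaternions. -/
def SpH : Set ℍ[ℝ] := {q | q.re = 0 ∧ ‖q‖ = 1}

/-- The slice (complex plane) `L_I = {x + y I : x, y ∈ ℝ}`. -/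
def sliceL (I : ℍ[ℝ]) : Set ℍ[ℝ] := {q | ∃ x y : ℝ, q = (x : ℍ[ℝ]) + y • I}

/-- `f` has continuous partial derivatives on the `I`-slice part of `Ω` and satisfies the
Cauchy–Riemann equation `∂f/∂x + I ∂f/∂y = 0` there. -/
def SliceHolomorphicOn (I : ℍ[ℝ]) (f : ℍ[ℝ] → ℍ[ℝ]) (Ω : Set ℍ[ℝ]) : Prop :=
  ∃ fx fy : ℝ → ℝ → ℍ[ℝ],
    (∀ x y : ℝ, (x : ℍ[ℝ]) + y • I ∈ Ω →
      HasDerivAt (fun t : ℝ => f ((t : ℍ[ℝ]) + y • I)) (fx x y) x) ∧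
    (∀ x y : ℝ, (x : ℍ[ℝ]) + y • I ∈ Ω →
      HasDerivAt (fun t : ℝ => f ((x : ℍ[ℝ]) + t • I)) (fy x y) y) ∧
    ContinuousOn (fun p : ℝ × ℝ => fx p.1 p.2) {p : ℝ × ℝ | (p.1 : ℍ[ℝ]) + p.2 • I ∈ Ω} ∧
    ContinuousOn (fun p : ℝ × ℝ => fy p.1 p.2) {p : ℝ × ℝ | (p.1 : ℍ[ℝ]) + p.2 • I ∈ Ω} ∧
    ∀ x y : ℝ, (x : ℍ[ℝ]) + y • I ∈ Ω → fx x y + I * fy x y = 0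

/-- `f` is slice regular on `Ω`. -/
def SliceRegularOn (f : ℍ[ℝ] → ℍ[ℝ]) (Ω : Set ℍ[ℝ]) : Prop :=
  ∀ I ∈ SpH, SliceHolomorphicOn I f Ω

/-- `Ω` is axially symmetric. -/
def AxSymm (Ω : Set ℍ[ℝ]) : Prop :=
  ∀ (x y : ℝ), ∀ I ∈ SpH, (x : ℍ[ℝ]) + y • I ∈ Ω → ∀ J ∈ SpH, (x : ℍ[ℝ]) + y • J ∈ Ω

/-- `Ω` is an s-domain: a domain meeting the real axis whose slices are connected. -/
def IsSDomain (Ω : Set ℍ[ℝ]) : Prop :=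
  IsOpen Ω ∧ IsConnected Ω ∧ (∃ x : ℝ, (x : ℍ[ℝ]) ∈ Ω) ∧
    ∀ I ∈ SpH, IsConnected (Ω ∩ sliceL I)

/-- The axially symmetric completion of a set `S ⊆ ℍ`. -/
def symmComp (S : Set ℍ[ℝ]) : Set ℍ[ℝ] :=
  {q | ∃ (x y : ℝ) (I : ℍ[ℝ]), I ∈ SpH ∧ q = (x : ℍ[ℝ]) + y • I ∧
    ∃ J ∈ SpH, (x : ℍ[ℝ]) + y • J ∈ S}

/-- A domain of the slice `L_I`: a nonempty connected relatively open subset of `L_I`. -/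
def IsSliceDomain (I : ℍ[ℝ]) (D : Set ℍ[ℝ]) : Prop :=
  D ⊆ sliceL I ∧ IsConnected D ∧ IsOpen {p : ℝ × ℝ | (p.1 : ℍ[ℝ]) + p.2 • I ∈ D}

/-!
On a slice `L_K`, a slice regular function is, as a function of `x + y i ∈ ℂ`, a solution of the
Cauchy–Riemann system in which left multiplication by `K` plays the role of `i`. Pairing it with
the functionals `v ↦ φ v - i φ (K v)` produces ordinary holomorphic functions, so the identity
principle applies; comparing `f` on `L_L` with `½ [(1 - LJ) f(x + yJ) + (1 + LJ) f(x - yJ)]`,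
which agree on the real axis, gives the representation formula.

At `x₀ + y₀ I` the formula says `(u + v) + I J (v - u) = 0` for `u = f(x₀ + y₀ J)` and
`v = f(x₀ - y₀ J)`, both in the field `L_J`. As `I ∉ L_J`, this forces `u = v = 0`, and the
formula then gives `f(x₀ + y₀ L) = 0` for every `L`.
-/

open Complex Filter Topology Set

section CauchyRiemann

variable {E : Type*} [NormedAddCommGroup E] [NormedSpace ℝ E]

theorem hasFDerivAt_of_partials {F Fx Fy : ℂ → E} {z₀ : ℂ}
    (hx : ∀ᶠ z in 𝓝 z₀, HasDerivAt (fun t : ℝ => F ⟨t, z.im⟩) (Fx z) z.re)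
    (hy : ∀ᶠ z in 𝓝 z₀, HasDerivAt (fun t : ℝ => F ⟨z.re, t⟩) (Fy z) z.im)
    (hFx : ContinuousAt Fx z₀) (hFy : ContinuousAt Fy z₀) :
    HasFDerivAt F (reCLM.smulRight (Fx z₀) + imCLM.smulRight (Fy z₀)) z₀ := by
  have hmk : Tendsto (fun p : ℝ × ℝ => (⟨p.1, p.2⟩ : ℂ)) (𝓝 (z₀.re, z₀.im)) (𝓝 z₀) :=
    equivRealProdCLM.symm.continuous.tendsto (z₀.re, z₀.im)
  have hstrict := hasStrictFDerivAt_uncurry_coprod (f := fun x y => F ⟨x, y⟩)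
    (f₁ := fun x y => ContinuousLinearMap.toSpanSingleton ℝ (Fx ⟨x, y⟩))
    (f₂ := fun x y => ContinuousLinearMap.toSpanSingleton ℝ (Fy ⟨x, y⟩))
    (hmk.eventually hx) (hmk.eventually hy)
    (ContinuousLinearMap.toSpanSingletonCLE.continuous.continuousAt.comp (hFx.comp hmk))
    (ContinuousLinearMap.toSpanSingletonCLE.continuous.continuousAt.comp (hFy.comp hmk))
  refine (hstrict.hasFDerivAt.comp z₀ equivRealProdCLM.hasFDerivAt).congr_fderiv ?_
  ext1 h
  simp only [ContinuousLinearMap.comp_apply, ContinuousLinearEquiv.coe_coe, equivRealProdCLM_apply,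
    ContinuousLinearMap.coprod_apply, add_apply, ContinuousLinearMap.smulRight_apply, reCLM_apply,
    imCLM_apply]
  rfl

theorem differentiableAt_of_cauchyRiemann {ψ ψx ψy : ℂ → ℂ} {z₀ : ℂ}
    (hx : ∀ᶠ z in 𝓝 z₀, HasDerivAt (fun t : ℝ => ψ ⟨t, z.im⟩) (ψx z) z.re)
    (hy : ∀ᶠ z in 𝓝 z₀, HasDerivAt (fun t : ℝ => ψ ⟨z.re, t⟩) (ψy z) z.im)
    (hψx : ContinuousAt ψx z₀) (hψy : ContinuousAt ψy z₀) (hcr : ψy z₀ = I * ψx z₀) :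
    DifferentiableAt ℂ ψ z₀ := by
  refine (hasFDerivAt_of_restrictScalars ℝ (hasFDerivAt_of_partials hx hy hψx hψy)
    (f' := ContinuousLinearMap.toSpanSingleton ℂ (ψx z₀)) ?_).differentiableAt
  ext1 h
  simp only [ContinuousLinearMap.coe_restrictScalars', ContinuousLinearMap.toSpanSingleton_apply,
    smul_eq_mul, hcr, add_apply, ContinuousLinearMap.smulRight_apply, reCLM_apply, real_smul,
    imCLM_apply]
  conv_lhs => rw [← re_add_im h]
  ring

/-- For `E = ℂ` and `T = (I * ·)` these are the Cauchy–Riemann equations, with continuous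
partial derivatives. -/
def CauchyRiemannOn (T : E →L[ℝ] E) (F : ℂ → E) (U : Set ℂ) : Prop :=
  ∃ Fx Fy : ℂ → E, ContinuousOn Fx U ∧ ContinuousOn Fy U ∧ ∀ z ∈ U,
    HasDerivAt (fun t : ℝ => F ⟨t, z.im⟩) (Fx z) z.re ∧
      HasDerivAt (fun t : ℝ => F ⟨z.re, t⟩) (Fy z) z.im ∧ Fy z = T (Fx z)

namespace CauchyRiemannOn

variable {T : E →L[ℝ] E} {F G : ℂ → E} {U : Set ℂ}

theorem add (hF : CauchyRiemannOn T F U) (hG : CauchyRiemannOn T G U) :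
    CauchyRiemannOn T (F + G) U := by
  obtain ⟨Fx, Fy, hFx, hFy, hF⟩ := hF
  obtain ⟨Gx, Gy, hGx, hGy, hG⟩ := hG
  refine ⟨Fx + Gx, Fy + Gy, hFx.add hGx, hFy.add hGy, fun z hz => ?_⟩
  obtain ⟨hFx', hFy', hFT⟩ := hF z hz
  obtain ⟨hGx', hGy', hGT⟩ := hG z hz
  exact ⟨hFx'.add hGx', hFy'.add hGy', by simp [hFT, hGT]⟩

theorem sub (hF : CauchyRiemannOn T F U) (hG : CauchyRiemannOn T G U) :
    CauchyRiemannOn T (F - G) U := by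
  obtain ⟨Fx, Fy, hFx, hFy, hF⟩ := hF
  obtain ⟨Gx, Gy, hGx, hGy, hG⟩ := hG
  refine ⟨Fx - Gx, Fy - Gy, hFx.sub hGx, hFy.sub hGy, fun z hz => ?_⟩
  obtain ⟨hFx', hFy', hFT⟩ := hF z hz
  obtain ⟨hGx', hGy', hGT⟩ := hG z hz
  exact ⟨hFx'.sub hGx', hFy'.sub hGy', by simp [hFT, hGT]⟩

theorem comp_clm {E' : Type*} [NormedAddCommGroup E'] [NormedSpace ℝ E'] {T' : E' →L[ℝ] E'}
    (hF : CauchyRiemannOn T F U) (A : E →L[ℝ] E') (hA : ∀ v, A (T v) = T' (A v)) :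
    CauchyRiemannOn T' (A ∘ F) U := by
  obtain ⟨Fx, Fy, hFx, hFy, hF⟩ := hF
  refine ⟨A ∘ Fx, A ∘ Fy, A.continuous.comp_continuousOn hFx, A.continuous.comp_continuousOn hFy,
    fun z hz => ?_⟩
  obtain ⟨hFx', hFy', hFT⟩ := hF z hz
  exact ⟨A.hasFDerivAt.comp_hasDerivAt _ hFx', A.hasFDerivAt.comp_hasDerivAt _ hFy',
    by simp [hFT, hA]⟩

theorem const_smul (hF : CauchyRiemannOn T F U) (c : ℝ) : CauchyRiemannOn T (c • F) U := by
  obtain ⟨Fx, Fy, hFx, hFy, hF⟩ := hF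
  refine ⟨c • Fx, c • Fy, hFx.const_smul c, hFy.const_smul c, fun z hz => ?_⟩
  obtain ⟨hFx', hFy', hFT⟩ := hF z hz
  exact ⟨hFx'.const_smul c, hFy'.const_smul c, by simp [hFT]⟩

theorem const_mul {A : Type*} [NormedRing A] [NormedAlgebra ℝ A] {a b c : A} {F : ℂ → A}
    (hF : CauchyRiemannOn (ContinuousLinearMap.mul ℝ A a) F U) (h : c * a = b * c) :
    CauchyRiemannOn (ContinuousLinearMap.mul ℝ A b) (fun z => c * F z) U :=
  hF.comp_clm (ContinuousLinearMap.mul ℝ A c) fun v => by simp [← mul_assoc, h]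

theorem differentiableOn {ψ : ℂ → ℂ} (hψ : CauchyRiemannOn (ContinuousLinearMap.mul ℝ ℂ I) ψ U)
    (hU : IsOpen U) : DifferentiableOn ℂ ψ U := by
  obtain ⟨ψx, ψy, hψx, hψy, hψ⟩ := hψ
  intro z hz
  have hnhds : U ∈ 𝓝 z := hU.mem_nhds hz
  refine (differentiableAt_of_cauchyRiemann ?_ ?_ (hψx.continuousAt hnhds) (hψy.continuousAt hnhds)
    (hψ z hz).2.2).differentiableWithinAt
  · exact eventually_of_mem hnhds fun w hw => (hψ w hw).1
  · exact eventually_of_mem hnhds fun w hw => (hψ w hw).2.1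

end CauchyRiemannOn

def complexifyDual (T : E →L[ℝ] E) (φ : StrongDual ℝ E) : E →L[ℝ] ℂ :=
  φ.smulRight (1 : ℂ) - (φ.comp T).smulRight I

theorem re_complexifyDual (T : E →L[ℝ] E) (φ : StrongDual ℝ E) (v : E) :
    (complexifyDual T φ v).re = φ v := by
  simp [complexifyDual]

theorem complexifyDual_apply_self {T : E →L[ℝ] E} (hT : ∀ v, T (T v) = -v) (φ : StrongDual ℝ E)
    (v : E) : complexifyDual T φ (T v) = I * complexifyDual T φ v := by
  apply Complex.ext <;> simp [complexifyDual, hT]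

theorem CauchyRiemannOn.eqOn_zero_of_frequently_eq_zero {T : E →L[ℝ] E}
    (hT : ∀ v, T (T v) = -v) {F : ℂ → E} {U : Set ℂ} (hF : CauchyRiemannOn T F U) (hU : IsOpen U)
    (hU' : IsPreconnected U) {z₀ : ℂ} (h₀ : z₀ ∈ U) (hfw : ∃ᶠ z in 𝓝[≠] z₀, F z = 0) :
    EqOn F 0 U := by
  intro z hz
  -- composed with `complexifyDual T φ`, `F` becomes holomorphic; the `φ` separate points of `E`
  refine SeparatingDual.eq_zero_of_forall_dual_eq_zero (R := ℝ) fun φ => ?_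
  have hψ := hF.comp_clm (complexifyDual T φ) (T' := ContinuousLinearMap.mul ℝ ℂ I)
    fun v => by simp [complexifyDual_apply_self hT]
  have hψ' := (hψ.differentiableOn hU).analyticOnNhd hU
  have hzero := hψ'.eqOn_zero_of_preconnected_of_frequently_eq_zero hU' h₀
    (hfw.mono fun w hw => by simp [hw])
  simpa [re_complexifyDual] using congrArg Complex.re (hzero hz)

end CauchyRiemann

theorem mul_self_eq_neg_one_of_mem_SpH {I : ℍ[ℝ]} (hI : I ∈ SpH) : I * I = -1 := by
  rw [← sq, Quaternion.sq_eq_neg_normSq.mpr hI.1, Quaternion.normSq_eq_norm_mul_self, hI.2,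
    mul_one]
  rfl

theorem neg_mem_SpH {I : ℍ[ℝ]} (hI : I ∈ SpH) : -I ∈ SpH :=
  ⟨by simp [hI.1], by simp [hI.2]⟩

def toSlice (I : ℍ[ℝ]) (z : ℂ) : ℍ[ℝ] := z.re + z.im • I

@[simp]
theorem toSlice_ofReal (I : ℍ[ℝ]) (t : ℝ) : toSlice I t = t := by
  simp [toSlice]

theorem continuous_toSlice (I : ℍ[ℝ]) : Continuous (toSlice I) :=
  (Quaternion.continuous_coe.comp Complex.continuous_re).add (continuous_im.smul continuous_const)

theorem range_toSlice (I : ℍ[ℝ]) : range (toSlice I) = sliceL I := by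
  ext q
  constructor
  · rintro ⟨z, rfl⟩
    exact ⟨z.re, z.im, rfl⟩
  · rintro ⟨x, y, rfl⟩
    exact ⟨⟨x, y⟩, rfl⟩

theorem toSlice_eq_liftAux {I : ℍ[ℝ]} (hI : I * I = -1) : toSlice I = liftAux I hI :=
  funext fun z => by simp [toSlice, liftAux_apply, Quaternion.algebraMap_def]

theorem isPreconnected_preimage_toSlice {I : ℍ[ℝ]} (hI : I * I = -1) {Ω : Set ℍ[ℝ]}
    (h : IsPreconnected (Ω ∩ sliceL I)) : IsPreconnected (toSlice I ⁻¹' Ω) := by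
  have hemb : IsClosedEmbedding (liftAux I hI).toLinearMap :=
    LinearMap.isClosedEmbedding_of_injective (LinearMap.ker_eq_bot.mpr (liftAux I hI).injective)
  have := hemb.isInducing.isPreconnected_image (s := toSlice I ⁻¹' Ω)
  rw [AlgHom.coe_toLinearMap, ← toSlice_eq_liftAux hI, image_preimage_eq_inter_range,
    range_toSlice] at this
  exact this.mp h

theorem AxSymm.preimage_toSlice_eq {Ω : Set ℍ[ℝ]} (hax : AxSymm Ω) {I J : ℍ[ℝ]} (hI : I ∈ SpH)
    (hJ : J ∈ SpH) : toSlice I ⁻¹' Ω = toSlice J ⁻¹' Ω :=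
  Set.ext fun z => ⟨fun h => hax z.re z.im I hI h J hJ, fun h => hax z.re z.im J hJ h I hI⟩

theorem SliceHolomorphicOn.cauchyRiemannOn {I : ℍ[ℝ]} (hI : I * I = -1) {f : ℍ[ℝ] → ℍ[ℝ]}
    {Ω : Set ℍ[ℝ]} (hf : SliceHolomorphicOn I f Ω) :
    CauchyRiemannOn (ContinuousLinearMap.mul ℝ ℍ[ℝ] I) (f ∘ toSlice I) (toSlice I ⁻¹' Ω) := by
  obtain ⟨fx, fy, hfx, hfy, hcx, hcy, hcr⟩ := hf
  have hmaps : MapsTo (fun z : ℂ => (z.re, z.im)) (toSlice I ⁻¹' Ω)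
      {p : ℝ × ℝ | (p.1 : ℍ[ℝ]) + p.2 • I ∈ Ω} := fun z hz => hz
  refine ⟨fun z => fx z.re z.im, fun z => fy z.re z.im, hcx.comp (by fun_prop) hmaps,
    hcy.comp (by fun_prop) hmaps, fun z hz => ⟨hfx z.re z.im hz, hfy z.re z.im hz, ?_⟩⟩
  show fy z.re z.im = I * fx z.re z.im
  rw [eq_neg_of_add_eq_zero_left (hcr z.re z.im hz), mul_neg,
    ← mul_assoc, hI, neg_one_mul, neg_neg]

theorem frequently_nhdsNE_ofReal {p : ℂ → Prop} (h : ∀ t : ℝ, p t) (x : ℝ) :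
    ∃ᶠ z in 𝓝[≠] (x : ℂ), p z := by
  have : Tendsto ((↑) : ℝ → ℂ) (𝓝[≠] x) (𝓝[≠] (x : ℂ)) :=
    continuous_ofReal.continuousWithinAt.tendsto_nhdsWithin fun _ ht => ofReal_injective.ne ht
  exact this.frequently (Frequently.of_forall h)

theorem SliceRegularOn.representation_formula {Ω : Set ℍ[ℝ]} {f : ℍ[ℝ] → ℍ[ℝ]}
    (hf : SliceRegularOn f Ω) (hΩ : IsSDomain Ω) (hax : AxSymm Ω) {J L : ℍ[ℝ]} (hJ : J ∈ SpH)
    (hL : L ∈ SpH) {z : ℂ} (hz : toSlice J z ∈ Ω) :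
    f (toSlice L z) =
      (2⁻¹ : ℝ) • ((1 - L * J) * f (toSlice J z) + (1 + L * J) * f (toSlice (-J) z)) := by
  have hJ2 := mul_self_eq_neg_one_of_mem_SpH hJ
  have hL2 := mul_self_eq_neg_one_of_mem_SpH hL
  have hFL := (hf L hL).cauchyRiemannOn hL2
  have hP := (hf J hJ).cauchyRiemannOn hJ2
  have hN := (hf (-J) (neg_mem_SpH hJ)).cauchyRiemannOn (by rw [neg_mul_neg, hJ2])
  rw [hax.preimage_toSlice_eq hL hJ] at hFL
  rw [hax.preimage_toSlice_eq (neg_mem_SpH hJ) hJ] at hN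
  have hA : (1 - L * J) * J = L * (1 - L * J) := by
    simp only [sub_mul, mul_sub, one_mul, mul_one, mul_assoc, hJ2, ← mul_assoc L L, hL2]
    noncomm_ring
  have hB : (1 + L * J) * -J = L * (1 + L * J) := by
    simp only [add_mul, mul_add, one_mul, mul_one, mul_assoc, mul_neg, hJ2, ← mul_assoc L L, hL2]
    noncomm_ring
  have hsum : ∀ a : ℍ[ℝ], (1 - L * J) * a + (1 + L * J) * a = (2 : ℝ) • a := fun a => by
    rw [two_smul]
    noncomm_ring
  have hH := hFL.sub (((hP.const_mul hA).add (hN.const_mul hB)).const_smul 2⁻¹)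
  obtain ⟨x, hx⟩ := hΩ.2.2.1
  have hreal : ∀ t : ℝ, f t - (2⁻¹ : ℝ) • ((1 - L * J) * f t + (1 + L * J) * f t) = 0 := by
    simp [hsum, smul_smul]
  have hzero := hH.eqOn_zero_of_frequently_eq_zero (fun v => by simp [← mul_assoc, hL2])
    (hΩ.1.preimage (continuous_toSlice J))
    (isPreconnected_preimage_toSlice hJ2 (hΩ.2.2.2 J hJ).isPreconnected) (z₀ := x)
    (by simpa using hx) (frequently_nhdsNE_ofReal (fun t => by simpa using hreal t) x) hz
  exact sub_eq_zero.mp hzero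

theorem mem_range_of_add_mul_eq_zero {K D F : Type*} [DivisionRing K] [DivisionRing D]
    [FunLike F K D] [RingHomClass F K D] (φ : F) {a : D} {s t : K} (ht : t ≠ 0)
    (h : φ s + a * φ t = 0) : a ∈ range φ :=
  ⟨-s * t⁻¹, by rw [map_mul, map_neg, map_inv₀, mul_inv_eq_iff_eq_mul₀ ((map_ne_zero φ).mpr ht),
    eq_neg_of_add_eq_zero_right h]⟩

theorem eq_zero_of_mul_add_mul_eq_zero {I J u v : ℍ[ℝ]} (hJ : J * J = -1) (hI : I ∉ sliceL J)
    (hu : u ∈ sliceL J) (hv : v ∈ sliceL J) (h : (1 - I * J) * u + (1 + I * J) * v = 0) :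
    u = 0 ∧ v = 0 := by
  rw [← range_toSlice, toSlice_eq_liftAux hJ] at hI hu hv
  obtain ⟨p, rfl⟩ := hu
  obtain ⟨n, rfl⟩ := hv
  have hsplit : liftAux J hJ (p + n) + I * liftAux J hJ (Complex.I * (n - p)) = 0 := by
    rw [← h, map_add, map_mul, map_sub, liftAux_apply_I]
    noncomm_ring
  by_cases ht : Complex.I * (n - p) = 0
  · obtain rfl : n = p := by simpa [sub_eq_zero] using ht
    rw [sub_self, mul_zero, map_zero, mul_zero, add_zero, map_eq_zero, add_self_eq_zero] at hsplit
    simp [hsplit]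
  · exact absurd (mem_range_of_add_mul_eq_zero _ ht hsplit) hI

/-- A slice-preserving regular function vanishing at one point of a sphere not on the
preserved slice vanishes on the whole sphere. -/
theorem zeros_spherical
    (Ω : Set ℍ[ℝ]) (hΩ : IsSDomain Ω) (hax : AxSymm Ω)
    (f : ℍ[ℝ] → ℍ[ℝ]) (hf : SliceRegularOn f Ω)
    (J : ℍ[ℝ]) (hJ : J ∈ SpH) (hmaps : ∀ q ∈ Ω ∩ sliceL J, f q ∈ sliceL J)
    (x₀ y₀ : ℝ) (I : ℍ[ℝ]) (hI : I ∈ SpH) (hInot : I ∉ sliceL J)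
    (hq : (x₀ : ℍ[ℝ]) + y₀ • I ∈ Ω) (hz : f ((x₀ : ℍ[ℝ]) + y₀ • I) = 0) :
    ∀ L ∈ SpH, f ((x₀ : ℍ[ℝ]) + y₀ • L) = 0 := by
  intro L hL
  have hxJ : toSlice J ⟨x₀, y₀⟩ ∈ Ω := hax x₀ y₀ I hI hq J hJ
  have hxJ' : toSlice (-J) ⟨x₀, y₀⟩ ∈ Ω := hax x₀ y₀ I hI hq (-J) (neg_mem_SpH hJ)
  obtain ⟨hzJ, hzJ'⟩ : f (toSlice J ⟨x₀, y₀⟩) = 0 ∧ f (toSlice (-J) ⟨x₀, y₀⟩) = 0 := by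
    refine eq_zero_of_mul_add_mul_eq_zero (mul_self_eq_neg_one_of_mem_SpH hJ) hInot
      (hmaps _ ⟨hxJ, x₀, y₀, rfl⟩) (hmaps _ ⟨hxJ', x₀, -y₀, by simp [toSlice]⟩) ?_
    have := hf.representation_formula hΩ hax hJ hI hxJ
    rw [show f (toSlice I ⟨x₀, y₀⟩) = 0 from hz, eq_comm, smul_eq_zero] at this
    exact this.resolve_left (by norm_num)
  show f (toSlice L ⟨x₀, y₀⟩) = 0
  rw [hf.representation_formula hΩ hax hJ hL hxJ, hzJ, hzJ']
  simp

end
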